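/- arXiv:2502.14096 — 4 statements merged into one kernel-verified Lean document; each statement's English description precedes it below -/
import Mathlib

section
/- Let (r_k)_{k ≥ 0} be a sequence of non-negative real numbers satisfying the recurrence r_{k+1}² ≤ r_k² − α₁ r_k²/(1 + α₂ r_k) for all k, where α₁ ∈ (0, 2) and α₂ ≥ 0. Let k_0 := ⌈4(r_0 α₂ − 1)/α₁⌉. Then for every k ≥ k_0, r_k ≤ r_{k_0}·(1 − α₁/2)^{(k − k_0)/2}, and for every k < k_0, r_k ≤ r_0 − k·α₁/(4α₂). -/
/-!
Write `s = α₂ r`. While `s ≥ 1` we have `1 + s ≤ 2 s`, so the decrement `α₁ r² / (1 + s)` is at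
least `α₁ r / (2 α₂)` and `r² − α₁ r / (2 α₂) ≤ (r − α₁ / (4 α₂))²`: `s` drops by `α₁ / 4` per step.
Hence `s_k ≤ max 1 (s_0 − k α₁ / 4)`, which gives the linear bound before `k₀` and `s_{k₀} ≤ 1`.
Once `s ≤ 1` (and it stays so, `r` being antitone) we have `1 + s ≤ 2`, so
`r_{k+1}² ≤ (1 − α₁ / 2) r_k²`, a geometric decay at rate `√(1 − α₁ / 2)`.
-/

section OneStep

variable {α₁ α₂ x y : ℝ}

theorem le_of_sq_le_sq_sub_div (hα₁ : 0 ≤ α₁) (hα₂x : 0 ≤ α₂ * x) (hx : 0 ≤ x)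
    (h : y ^ 2 ≤ x ^ 2 - α₁ * x ^ 2 / (1 + α₂ * x)) : y ≤ x :=
  le_of_sq_le_sq (h.trans (sub_le_self _ (by positivity))) hx

theorem mul_le_mul_sub_of_sq_le_sq_sub_div (hα₁ : 0 ≤ α₁) (hx : 1 ≤ α₂ * x)
    (h : y ^ 2 ≤ x ^ 2 - α₁ * x ^ 2 / (1 + α₂ * x)) : α₂ * y ≤ α₂ * x - α₁ / 4 := by
  set s := α₂ * x
  have hs : 0 < s := by linarith
  have hdec : α₁ * s / 2 ≤ α₁ * s ^ 2 / (1 + s) := by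
    rw [div_le_div_iff₀ two_pos (by positivity)]
    nlinarith [mul_nonneg hα₁ hs.le]
  have hsq : (α₂ * y) ^ 2 ≤ s ^ 2 - α₁ * s / 2 := by
    have h' := mul_le_mul_of_nonneg_left h (sq_nonneg α₂)
    have : α₂ ^ 2 * (α₁ * x ^ 2 / (1 + s)) = α₁ * s ^ 2 / (1 + s) := by ring
    nlinarith
  have hpos : 0 ≤ s - α₁ / 4 := by nlinarith [sq_nonneg (α₂ * y)]
  exact le_of_sq_le_sq (by nlinarith) hpos

theorem sq_le_mul_sq_of_sq_le_sq_sub_div (hα₁ : 0 ≤ α₁) (hα₂x : 0 ≤ α₂ * x)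
    (hx : α₂ * x ≤ 1) (h : y ^ 2 ≤ x ^ 2 - α₁ * x ^ 2 / (1 + α₂ * x)) :
    y ^ 2 ≤ (1 - α₁ / 2) * x ^ 2 := by
  have : α₁ * x ^ 2 / 2 ≤ α₁ * x ^ 2 / (1 + α₂ * x) :=
    div_le_div_of_nonneg_left (by positivity) (by positivity) (by linarith)
  linarith

end OneStep

theorem le_mul_rpow_of_sq_succ_le {q : ℝ} {x : ℕ → ℝ} {m : ℕ} (hq : 0 ≤ q)
    (hx : ∀ n, 0 ≤ x n) (h : ∀ n, m ≤ n → x (n + 1) ^ 2 ≤ q * x n ^ 2) :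
    ∀ n, m ≤ n → x n ≤ x m * q ^ (((n : ℝ) - m) / 2) := by
  intro n hn
  induction n, hn using Nat.le_induction with
  | base => simp
  | succ n hn ih =>
    have hstep : x (n + 1) ≤ x n * √q :=
      le_of_sq_le_sq (by rw [mul_pow, Real.sq_sqrt hq, mul_comm]; exact h n hn)
        (mul_nonneg (hx n) (Real.sqrt_nonneg q))
    have hmn : (m : ℝ) ≤ n := by exact_mod_cast hn
    calc x (n + 1) ≤ x n * √q := hstep
      _ ≤ x m * q ^ (((n : ℝ) - m) / 2) * √q := by gcongr
      _ = x m * q ^ ((((n + 1 : ℕ) : ℝ) - m) / 2) := by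
        rw [Real.sqrt_eq_rpow, mul_assoc, ← Real.rpow_add' hq (by positivity)]
        push_cast
        ring_nf

section Recurrence

variable {α₁ α₂ : ℝ} {r : ℕ → ℝ}

theorem antitone_of_sq_le_sq_sub_div (hα₁ : 0 ≤ α₁) (hα₂ : 0 ≤ α₂) (hr : ∀ k, 0 ≤ r k)
    (hrec : ∀ k, r (k + 1) ^ 2 ≤ r k ^ 2 - α₁ * r k ^ 2 / (1 + α₂ * r k)) : Antitone r :=
  antitone_nat_of_succ_le fun k =>
    le_of_sq_le_sq_sub_div hα₁ (mul_nonneg hα₂ (hr k)) (hr k) (hrec k)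

theorem mul_le_max_one_sub (hα₁ : 0 ≤ α₁) (hα₂ : 0 ≤ α₂) (hr : ∀ k, 0 ≤ r k)
    (hrec : ∀ k, r (k + 1) ^ 2 ≤ r k ^ 2 - α₁ * r k ^ 2 / (1 + α₂ * r k)) (k : ℕ) :
    α₂ * r k ≤ max 1 (α₂ * r 0 - k * α₁ / 4) := by
  induction k with
  | zero => simp
  | succ k ih =>
    rcases le_or_gt (α₂ * r k) 1 with hsmall | hlarge
    · have hanti := antitone_of_sq_le_sq_sub_div hα₁ hα₂ hr hrec (Nat.le_succ k)
      exact le_max_of_le_left ((mul_le_mul_of_nonneg_left hanti hα₂).trans hsmall)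
    · have hstep := mul_le_mul_sub_of_sq_le_sq_sub_div hα₁ hlarge.le (hrec k)
      have ih' : α₂ * r k ≤ α₂ * r 0 - k * α₁ / 4 :=
        (le_max_iff.mp ih).resolve_left hlarge.not_ge
      refine le_max_of_le_right ?_
      push_cast
      linarith

theorem mul_le_one_of_div_le (hα₁ : 0 < α₁) (hα₂ : 0 ≤ α₂) (hr : ∀ k, 0 ≤ r k)
    (hrec : ∀ k, r (k + 1) ^ 2 ≤ r k ^ 2 - α₁ * r k ^ 2 / (1 + α₂ * r k)) {k : ℕ}
    (hk : 4 * (r 0 * α₂ - 1) / α₁ ≤ k) : α₂ * r k ≤ 1 := by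
  have hk' : α₂ * r 0 - k * α₁ / 4 ≤ 1 := by
    rw [div_le_iff₀ hα₁] at hk
    linarith
  simpa [hk'] using mul_le_max_one_sub hα₁.le hα₂ hr hrec k

theorem le_sub_mul_div_of_lt_div (hα₁ : 0 < α₁) (hα₂ : 0 ≤ α₂) (hr : ∀ k, 0 ≤ r k)
    (hrec : ∀ k, r (k + 1) ^ 2 ≤ r k ^ 2 - α₁ * r k ^ 2 / (1 + α₂ * r k)) {k : ℕ}
    (hk : k < 4 * (r 0 * α₂ - 1) / α₁) : r k ≤ r 0 - k * α₁ / (4 * α₂) := by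
  rw [lt_div_iff₀ hα₁] at hk
  have hα₂pos : 0 < α₂ :=
    pos_of_mul_pos_right (by nlinarith [mul_nonneg (Nat.cast_nonneg k) hα₁.le]) (hr 0)
  have hlin := mul_le_max_one_sub hα₁.le hα₂ hr hrec k
  rw [max_eq_right (by linarith)] at hlin
  have hcancel : α₂ * (k * α₁ / (4 * α₂)) = k * α₁ / 4 := by field_simp
  rw [← mul_le_mul_iff_of_pos_left hα₂pos, mul_sub, hcancel]
  exact hlin

end Recurrence

/-- Recurrence bound (exact AMOO): if `r_{k+1}² ≤ r_k² − α₁ r_k²/(1 + α₂ r_k)` with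
`α₁ ∈ (0,2)` and `α₂ ≥ 0`, then the sequence decreases at least linearly (in `r`) until
iteration `k₀ = ⌈4(r₀α₂ − 1)/α₁⌉`, after which it converges at a linear rate. -/
theorem recurrence_bound_amoo (r : ℕ → ℝ) (α₁ α₂ : ℝ)
    (hα₁ : α₁ ∈ Set.Ioo (0 : ℝ) 2) (hα₂ : 0 ≤ α₂)
    (hr : ∀ k, 0 ≤ r k)
    (hrec : ∀ k, (r (k + 1)) ^ 2 ≤ (r k) ^ 2 - α₁ * (r k) ^ 2 / (1 + α₂ * r k))
    (k₀ : ℕ) (hk₀ : k₀ = (⌈4 * (r 0 * α₂ - 1) / α₁⌉ : ℤ).toNat) :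
    ∀ k : ℕ,
      (k₀ ≤ k → r k ≤ r k₀ * (1 - α₁ / 2) ^ (((k : ℝ) - (k₀ : ℝ)) / 2)) ∧
      (k < k₀ → r k ≤ r 0 - (k : ℝ) * α₁ / (4 * α₂)) := by
  obtain ⟨hα₁pos, hα₁lt⟩ := hα₁
  rw [Int.ceil_toNat] at hk₀
  have hanti := antitone_of_sq_le_sq_sub_div hα₁pos.le hα₂ hr hrec
  have hsmall : ∀ n, k₀ ≤ n → α₂ * r n ≤ 1 := fun n hn =>
    (mul_le_mul_of_nonneg_left (hanti hn) hα₂).trans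
      (mul_le_one_of_div_le hα₁pos hα₂ hr hrec (hk₀ ▸ Nat.le_ceil _))
  refine fun k => ⟨fun hk => ?_, fun hk => ?_⟩
  · refine le_mul_rpow_of_sq_succ_le (by linarith) hr (fun n hn => ?_) k hk
    exact sq_le_mul_sq_of_sq_le_sq_sub_div hα₁pos.le (mul_nonneg hα₂ (hr n)) (hsmall n hn)
      (hrec n)
  · exact le_sub_mul_div_of_lt_div hα₁pos hα₂ hr hrec (Nat.lt_ceil.mp (hk₀ ▸ hk))
end

section
/- Let (r_k)_{k ≥ 0} be a sequence of non-negative real numbers satisfying the recurrence r_{k+1}² ≤ r_k² − α₁ r_k²/(1 + α₂ r_k) + α₃ + α₄ r_k for all k, where α₁ ∈ (0, 2), α₂ > 0, 0 ≤ α₃ ≤ α₁²/(256 α₂²), and 0 ≤ α₄ ≤ α₁/(4α₂). Let k_0 := ⌈16(r_0 α₂ − 1)/α₁⌉. Then for every k ≥ k_0, r_k ≤ r_{k_0}·(1 − α₁/2)^{(k − k_0)/2} + √(2α₃/α₁ + 2α₄/(α₁ α₂)), and for every k < k_0, r_k ≤ r_0 − k·α₁/(16 α₂). -/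
/-!
Below the threshold `1 / α₂` the denominator `1 + α₂ r` is at most `2`, so the recurrence becomes
the affine contraction `r_{k+1}² ≤ (1 - α₁ / 2) r_k² + α₃ + α₄ / α₂`, whose fixed point is
`2 α₃ / α₁ + 2 α₄ / (α₁ α₂)`; the smallness of `α₃, α₄` keeps the sequence below the threshold.
Above it, `α₁ r² / (1 + α₂ r) ≥ α₁ r / (2 α₂)` dominates the perturbation and
`r_{k+1} ≤ r_k - α₁ / (16 α₂)`. Hence `r_k ≤ max (r_0 - k α₁ / (16 α₂)) (1 / α₂)` for all `k`,
and `k₀` is the first index at which the linear term has dropped below the threshold.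
-/

open Real

theorem Real.sqrt_add_le_add_sqrt {x y : ℝ} (hx : 0 ≤ x) (hy : 0 ≤ y) : √(x + y) ≤ √x + √y := by
  rw [sqrt_le_left (by positivity), add_sq, sq_sqrt hx, sq_sqrt hy]
  have := mul_nonneg (sqrt_nonneg x) (sqrt_nonneg y)
  linarith

theorem le_mul_rpow_half_add_sqrt_of_sq_le {x y ρ E : ℝ} {m : ℕ} (hy : 0 ≤ y) (hρ : 0 ≤ ρ)
    (hE : 0 ≤ E) (h : x ^ 2 ≤ ρ ^ m * y ^ 2 + E) : x ≤ y * ρ ^ ((m : ℝ) / 2) + √E := by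
  have hsqrt : √(ρ ^ m * y ^ 2) = y * ρ ^ ((m : ℝ) / 2) := by
    rw [mul_comm, sqrt_mul (sq_nonneg y), sqrt_sq hy, sqrt_eq_rpow, ← rpow_natCast,
      ← rpow_mul hρ, mul_one_div]
  calc x ≤ √(ρ ^ m * y ^ 2 + E) := le_sqrt_of_sq_le h
    _ ≤ √(ρ ^ m * y ^ 2) + √E := sqrt_add_le_add_sqrt (by positivity) hE
    _ = y * ρ ^ ((m : ℝ) / 2) + √E := by rw [hsqrt]

theorem le_max_sub_mul_of_le_max_sub {u : ℕ → ℝ} {A b : ℝ} (hA : 0 ≤ A)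
    (h : ∀ n, u (n + 1) ≤ max (u n - A) b) (n : ℕ) : u n ≤ max (u 0 - n * A) b := by
  induction n with
  | zero => simp
  | succ n ih =>
    refine (h n).trans (max_le ?_ (le_max_right _ _))
    rcases le_max_iff.mp ih with hu | hu
    · exact le_max_of_le_left (by push_cast; linarith)
    · exact le_max_of_le_right (by linarith)

theorem le_pow_mul_sub_add_of_le_mul_add {s : ℕ → ℝ} {ρ C E : ℝ} (hρ : 0 ≤ ρ)
    (hE : ρ * E + C ≤ E) (h : ∀ n, s (n + 1) ≤ ρ * s n + C) (n : ℕ) :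
    s n ≤ ρ ^ n * (s 0 - E) + E := by
  induction n with
  | zero => simp
  | succ n ih =>
    calc s (n + 1) ≤ ρ * (ρ ^ n * (s 0 - E) + E) + C := (h n).trans (by gcongr)
      _ ≤ ρ ^ (n + 1) * (s 0 - E) + E := by rw [pow_succ]; linarith


def RecurrenceStep (α₁ α₂ α₃ α₄ x y : ℝ) : Prop :=
  y ^ 2 ≤ x ^ 2 - α₁ * x ^ 2 / (1 + α₂ * x) + α₃ + α₄ * x

namespace RecurrenceStep

variable {α₁ α₂ α₃ α₄ x y : ℝ}

theorem le_sub_of_inv_le (hα₁ : 0 ≤ α₁) (hα₁' : α₁ ≤ 2) (hα₂ : 0 < α₂)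
    (hα₃' : α₃ ≤ α₁ ^ 2 / (256 * α₂ ^ 2)) (hα₄' : α₄ ≤ α₁ / (4 * α₂)) (hx : α₂⁻¹ ≤ x)
    (h : RecurrenceStep α₁ α₂ α₃ α₄ x y) : y ≤ x - α₁ / (16 * α₂) := by
  have hαx : 1 ≤ α₂ * x := by rwa [inv_le_iff_one_le_mul₀' hα₂] at hx
  have hx0 : 0 ≤ x := (inv_nonneg.mpr hα₂.le).trans hx
  have hdecr : α₁ * x / (2 * α₂) ≤ α₁ * x ^ 2 / (1 + α₂ * x) := by
    rw [div_le_div_iff₀ (by positivity) (by positivity)]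
    nlinarith [mul_nonneg hα₁ hx0]
  have hα₃x : α₁ ^ 2 / (256 * α₂ ^ 2) ≤ α₁ * x / (128 * α₂) := by
    rw [div_le_div_iff₀ (by positivity) (by positivity)]
    nlinarith [mul_nonneg hα₁ hα₂.le, mul_nonneg (mul_nonneg hα₁ hα₂.le) hα₂.le]
  have hα₄x : α₄ * x ≤ α₁ * x / (4 * α₂) := by
    calc α₄ * x ≤ α₁ / (4 * α₂) * x := by gcongr
      _ = α₁ * x / (4 * α₂) := by ring
  have hA : α₁ / (16 * α₂) ≤ x := by
    refine le_trans ?_ hx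
    rw [div_le_iff₀ (by positivity), inv_mul_eq_div, mul_div_assoc, div_self hα₂.ne']
    linarith
  refine abs_le_of_sq_le_sq' ?_ (by linarith) |>.2
  have hu : 0 ≤ α₁ * x / α₂ := by positivity
  unfold RecurrenceStep at h
  linear_combination h + hdecr + hα₃' + hα₃x + hα₄x + 15 / 128 * hu
    + sq_nonneg (α₁ / (16 * α₂))

theorem sq_le_of_le_inv (hα₁ : 0 ≤ α₁) (hα₂ : 0 < α₂) (hα₄ : 0 ≤ α₄) (hx₀ : 0 ≤ x)
    (hx : x ≤ α₂⁻¹) (h : RecurrenceStep α₁ α₂ α₃ α₄ x y) :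
    y ^ 2 ≤ (1 - α₁ / 2) * x ^ 2 + (α₃ + α₄ / α₂) := by
  have hαx : α₂ * x ≤ 1 := by simpa [hα₂.ne'] using mul_le_mul_of_nonneg_left hx hα₂.le
  have hdecr : α₁ * x ^ 2 / 2 ≤ α₁ * x ^ 2 / (1 + α₂ * x) :=
    div_le_div_of_nonneg_left (by positivity) (by positivity) (by linarith)
  have hα₄x : α₄ * x ≤ α₄ / α₂ := by
    rw [div_eq_mul_inv]; exact mul_le_mul_of_nonneg_left hx hα₄
  unfold RecurrenceStep at h
  linarith

theorem le_inv_of_le_inv (hα₁ : 0 ≤ α₁) (hα₁' : α₁ ≤ 2) (hα₂ : 0 < α₂)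
    (hα₃' : α₃ ≤ α₁ ^ 2 / (256 * α₂ ^ 2)) (hα₄ : 0 ≤ α₄) (hα₄' : α₄ ≤ α₁ / (4 * α₂))
    (hx₀ : 0 ≤ x) (hx : x ≤ α₂⁻¹) (h : RecurrenceStep α₁ α₂ α₃ α₄ x y) : y ≤ α₂⁻¹ := by
  have hsq := h.sq_le_of_le_inv hα₁ hα₂ hα₄ hx₀ hx
  have hx2 : (1 - α₁ / 2) * x ^ 2 ≤ (1 - α₁ / 2) * α₂⁻¹ ^ 2 := by gcongr; linarith
  have hα₃_le : α₃ ≤ α₁ / 128 * α₂⁻¹ ^ 2 :=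
    calc α₃ ≤ α₁ * (α₁ / 256) * α₂⁻¹ ^ 2 := hα₃'.trans_eq (by field_simp)
      _ ≤ α₁ * (2 / 256) * α₂⁻¹ ^ 2 := by gcongr
      _ = α₁ / 128 * α₂⁻¹ ^ 2 := by ring
  have hα₄_le : α₄ / α₂ ≤ α₁ / 4 * α₂⁻¹ ^ 2 :=
    calc α₄ / α₂ ≤ α₁ / (4 * α₂) / α₂ := by gcongr
      _ = α₁ / 4 * α₂⁻¹ ^ 2 := by field_simp
  refine abs_le_of_sq_le_sq' ?_ (by positivity) |>.2
  linarith [mul_nonneg hα₁ (sq_nonneg α₂⁻¹)]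

theorem le_max (hα₁ : 0 ≤ α₁) (hα₁' : α₁ ≤ 2) (hα₂ : 0 < α₂)
    (hα₃' : α₃ ≤ α₁ ^ 2 / (256 * α₂ ^ 2)) (hα₄ : 0 ≤ α₄) (hα₄' : α₄ ≤ α₁ / (4 * α₂))
    (hx₀ : 0 ≤ x) (h : RecurrenceStep α₁ α₂ α₃ α₄ x y) :
    y ≤ max (x - α₁ / (16 * α₂)) α₂⁻¹ := by
  rcases le_total α₂⁻¹ x with hx | hx
  · exact le_max_of_le_left (h.le_sub_of_inv_le hα₁ hα₁' hα₂ hα₃' hα₄' hx)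
  · exact le_max_of_le_right (h.le_inv_of_le_inv hα₁ hα₁' hα₂ hα₃' hα₄ hα₄' hx₀ hx)

theorem le_mul_rpow_add_sqrt_of_le_inv {r : ℕ → ℝ} (hα₁ : 0 < α₁) (hα₁' : α₁ ≤ 2)
    (hα₂ : 0 < α₂) (hα₃ : 0 ≤ α₃) (hα₃' : α₃ ≤ α₁ ^ 2 / (256 * α₂ ^ 2)) (hα₄ : 0 ≤ α₄)
    (hα₄' : α₄ ≤ α₁ / (4 * α₂)) (hr : ∀ k, 0 ≤ r k)
    (hrec : ∀ k, RecurrenceStep α₁ α₂ α₃ α₄ (r k) (r (k + 1))) {n : ℕ} (hn : r n ≤ α₂⁻¹)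
    (m : ℕ) :
    r (n + m) ≤ r n * (1 - α₁ / 2) ^ ((m : ℝ) / 2) + √(2 * α₃ / α₁ + 2 * α₄ / (α₁ * α₂)) := by
  set E := 2 * α₃ / α₁ + 2 * α₄ / (α₁ * α₂)
  have hE : 0 ≤ E := by positivity
  have hρ : 0 ≤ 1 - α₁ / 2 := by linarith
  have hsmall : ∀ m, r (n + m) ≤ α₂⁻¹ := fun m => by
    induction m with
    | zero => exact hn
    | succ m ih => exact (hrec _).le_inv_of_le_inv hα₁.le hα₁' hα₂ hα₃' hα₄ hα₄' (hr _) ih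
  have hsq := le_pow_mul_sub_add_of_le_mul_add (s := fun m => r (n + m) ^ 2) hρ
    (C := α₃ + α₄ / α₂) (E := E) (le_of_eq (by simp only [E]; field_simp; ring))
    (fun m => (hrec (n + m)).sq_le_of_le_inv hα₁.le hα₂ hα₄ (hr _) (hsmall m)) m
  refine le_mul_rpow_half_add_sqrt_of_sq_le (hr n) hρ hE (hsq.trans ?_)
  have : 0 ≤ (1 - α₁ / 2) ^ m * E := by positivity
  simp only [add_zero]
  linarith

end RecurrenceStep

theorem inv_lt_sub_mul_iff {α₁ α₂ r₀ t : ℝ} (hα₁ : 0 < α₁) (hα₂ : 0 < α₂) :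
    α₂⁻¹ < r₀ - t * (α₁ / (16 * α₂)) ↔ t < 16 * (r₀ * α₂ - 1) / α₁ := by
  have : r₀ - t * (α₁ / (16 * α₂)) - α₂⁻¹ = (16 * (r₀ * α₂ - 1) - t * α₁) / (16 * α₂) := by
    field_simp; ring
  rw [← sub_pos, this, div_pos_iff_of_pos_right (by positivity), sub_pos, lt_div_iff₀ hα₁]

/-- Recurrence bound (`ε`-AAMOO): if
`r_{k+1}² ≤ r_k² − α₁ r_k²/(1 + α₂ r_k) + α₃ + α₄ r_k` with `α₁ ∈ (0,2)`, `α₂ > 0`,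
`0 ≤ α₃ ≤ α₁²/(256 α₂²)` and `0 ≤ α₄ ≤ α₁/(4α₂)`, then the sequence decreases at least
linearly (in `r`) until iteration `k₀ = ⌈16(r₀α₂ − 1)/α₁⌉`, after which it converges at a
linear rate up to an additive error. -/
theorem recurrence_bound_eps_aamoo (r : ℕ → ℝ) (α₁ α₂ α₃ α₄ : ℝ)
    (hα₁ : α₁ ∈ Set.Ioo (0 : ℝ) 2) (hα₂ : 0 < α₂)
    (hα₃ : 0 ≤ α₃) (hα₃' : α₃ ≤ α₁ ^ 2 / (256 * α₂ ^ 2))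
    (hα₄ : 0 ≤ α₄) (hα₄' : α₄ ≤ α₁ / (4 * α₂))
    (hr : ∀ k, 0 ≤ r k)
    (hrec : ∀ k, (r (k + 1)) ^ 2 ≤ (r k) ^ 2 - α₁ * (r k) ^ 2 / (1 + α₂ * r k) + α₃ + α₄ * r k)
    (k₀ : ℕ) (hk₀ : k₀ = (⌈16 * (r 0 * α₂ - 1) / α₁⌉ : ℤ).toNat) :
    ∀ k : ℕ,
      (k₀ ≤ k → r k ≤ r k₀ * (1 - α₁ / 2) ^ (((k : ℝ) - (k₀ : ℝ)) / 2)
          + Real.sqrt (2 * α₃ / α₁ + 2 * α₄ / (α₁ * α₂))) ∧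
      (k < k₀ → r k ≤ r 0 - (k : ℝ) * α₁ / (16 * α₂)) := by
  obtain ⟨hα₁₀, hα₁₂⟩ := hα₁
  have hstep : ∀ k, RecurrenceStep α₁ α₂ α₃ α₄ (r k) (r (k + 1)) := hrec
  have hlin : ∀ k, r k ≤ max (r 0 - k * (α₁ / (16 * α₂))) α₂⁻¹ :=
    le_max_sub_mul_of_le_max_sub (by positivity) fun k =>
      (hstep k).le_max hα₁₀.le hα₁₂.le hα₂ hα₃' hα₄ hα₄' (hr k)
  rw [Int.ceil_toNat] at hk₀
  have hrk₀ : r k₀ ≤ α₂⁻¹ := by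
    refine (hlin k₀).trans (max_le (not_lt.mp ?_) le_rfl)
    rw [inv_lt_sub_mul_iff hα₁₀ hα₂, not_lt, hk₀]
    exact Nat.le_ceil _
  intro k
  constructor
  · intro hk
    obtain ⟨m, rfl⟩ := Nat.exists_eq_add_of_le hk
    convert RecurrenceStep.le_mul_rpow_add_sqrt_of_le_inv hα₁₀ hα₁₂.le hα₂ hα₃ hα₃' hα₄ hα₄'
      hr hstep hrk₀ m using 4
    push_cast; ring
  · intro hk
    have hlarge := (inv_lt_sub_mul_iff hα₁₀ hα₂).mpr (Nat.lt_ceil.mp (hk₀ ▸ hk))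
    simpa only [max_eq_left hlarge.le, mul_div_assoc] using hlin k
end

section
/- Let H_1, …, H_m be real symmetric n×n matrices with spectral norm ‖H_i‖₂ ≤ β for every i ∈ [m], and let 0 < w_min ≤ 1/m. Let w⋆ ∈ Δ_m be a maximizer of w ↦ λ_min(Σ_{i=1}^m w_i H_i) over Δ_m, and let ŵ ∈ Δ_{m,w_min} be a maximizer of the same map over Δ_{m,w_min}. Then λ_min(Σ_{i=1}^m ŵ_i H_i) ≥ λ_min(Σ_{i=1}^m w⋆_i H_i) − 2 m w_min β. -/
open scoped BigOperators
noncomputable section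

/-- The spectral norm of a real matrix: the operator norm of the induced map on
Euclidean space. -/
def specNorm {n : ℕ} (A : Matrix (Fin n) (Fin n) ℝ) : ℝ :=
  ‖Matrix.toEuclideanCLM (𝕜 := ℝ) A‖

/-- The minimal eigenvalue of a real symmetric matrix, as the infimum of its Rayleigh
quotient over the Euclidean unit sphere. -/
def lamMin {n : ℕ} (A : Matrix (Fin n) (Fin n) ℝ) : ℝ :=
  ⨅ v : Metric.sphere (0 : EuclideanSpace ℝ (Fin n)) 1,
    ∑ i, ∑ j, (v : EuclideanSpace ℝ (Fin n)) i * A i j * (v : EuclideanSpace ℝ (Fin n)) j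

/-- The truncated simplex `Δ_{m,c}`: simplex weights bounded below by `c`. -/
def simplexC (m : ℕ) (c : ℝ) : Set (Fin m → ℝ) :=
  {w ∈ stdSimplex ℝ (Fin m) | ∀ i, c ≤ w i}

/-!
Shifting `w⋆` towards the uniform weights, `w' = (1 - m c) w⋆ + c 𝟙` with `c = w_min`, gives a
point of `Δ_{m,c}`. The infimum of the Rayleigh quotient is superadditive and positively
homogeneous in the operator, and lies in `[-‖T‖, ‖T‖]`; hence
`λ_min(Σ w'_i H_i) ≥ (1 - m c) λ_min(Σ w⋆_i H_i) + c λ_min(Σ H_i) ≥ λ_min(Σ w⋆_i H_i) - 2 m c β`,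
and `ŵ` does at least as well as `w'`.
-/

open scoped InnerProductSpace Matrix

section RayleighInf

variable {E : Type*} [NormedAddCommGroup E] [InnerProductSpace ℝ E]

/-- For an empty sphere (`E = 0`) this is the junk value `0`. -/
def rayleighInf (T : E →L[ℝ] E) : ℝ :=
  ⨅ v : Metric.sphere (0 : E) 1, ⟪T v, v⟫_ℝ

lemma abs_inner_apply_le_norm (T : E →L[ℝ] E) (v : Metric.sphere (0 : E) 1) :
    |⟪T v, (v : E)⟫_ℝ| ≤ ‖T‖ := by
  have hv : ‖(v : E)‖ = 1 := by simp
  calc |⟪T v, (v : E)⟫_ℝ| ≤ ‖T v‖ * ‖(v : E)‖ := abs_real_inner_le_norm _ _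
    _ ≤ ‖T‖ * ‖(v : E)‖ * ‖(v : E)‖ := by gcongr; exact T.le_opNorm v
    _ = ‖T‖ := by rw [hv, mul_one, mul_one]

lemma bddBelow_range_inner_apply (T : E →L[ℝ] E) :
    BddBelow (Set.range fun v : Metric.sphere (0 : E) 1 => ⟪T v, v⟫_ℝ) :=
  ⟨-‖T‖, Set.forall_mem_range.2 fun v => neg_le_of_abs_le (abs_inner_apply_le_norm T v)⟩

lemma neg_norm_le_rayleighInf (T : E →L[ℝ] E) : -‖T‖ ≤ rayleighInf T := by
  cases isEmpty_or_nonempty (Metric.sphere (0 : E) 1)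
  · rw [rayleighInf, Real.iInf_of_isEmpty, neg_nonpos]
    exact norm_nonneg T
  · exact le_ciInf fun v => neg_le_of_abs_le (abs_inner_apply_le_norm T v)

lemma rayleighInf_le_norm (T : E →L[ℝ] E) : rayleighInf T ≤ ‖T‖ := by
  cases isEmpty_or_nonempty (Metric.sphere (0 : E) 1) with
  | inl _ => rw [rayleighInf, Real.iInf_of_isEmpty]; exact norm_nonneg T
  | inr h =>
    obtain ⟨v⟩ := h
    exact (ciInf_le (bddBelow_range_inner_apply T) v).trans
      (le_of_abs_le (abs_inner_apply_le_norm T v))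

lemma rayleighInf_add_le (S T : E →L[ℝ] E) :
    rayleighInf S + rayleighInf T ≤ rayleighInf (S + T) := by
  cases isEmpty_or_nonempty (Metric.sphere (0 : E) 1)
  · simp only [rayleighInf, Real.iInf_of_isEmpty, add_zero, le_refl]
  · refine le_ciInf fun v => ?_
    rw [add_apply, inner_add_left]
    exact add_le_add (ciInf_le (bddBelow_range_inner_apply S) v)
      (ciInf_le (bddBelow_range_inner_apply T) v)

lemma rayleighInf_smul {t : ℝ} (ht : 0 ≤ t) (T : E →L[ℝ] E) :
    rayleighInf (t • T) = t * rayleighInf T := by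
  simp only [rayleighInf, Real.mul_iInf_of_nonneg ht, smul_apply,
    real_inner_smul_left]

lemma norm_sum_smul_le_of_mem_stdSimplex {ι : Type*} [Fintype ι] {w : ι → ℝ}
    (hw : w ∈ stdSimplex ℝ ι) {T : ι → E →L[ℝ] E} {β : ℝ} (hT : ∀ i, ‖T i‖ ≤ β) :
    ‖∑ i, w i • T i‖ ≤ β :=
  calc ‖∑ i, w i • T i‖ ≤ ∑ i, w i * β := by
        refine (norm_sum_le _ _).trans (Finset.sum_le_sum fun i _ => ?_)
        rw [norm_smul, Real.norm_of_nonneg (hw.1 i)]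
        exact mul_le_mul_of_nonneg_left (hT i) (hw.1 i)
    _ = β := by rw [← Finset.sum_mul, hw.2, one_mul]

lemma sub_le_rayleighInf_sum_shift {ι : Type*} [Fintype ι] {w : ι → ℝ}
    (hw : w ∈ stdSimplex ℝ ι) {c : ℝ} (hc : 0 ≤ c) (hmc : Fintype.card ι * c ≤ 1)
    {T : ι → E →L[ℝ] E} {β : ℝ} (hT : ∀ i, ‖T i‖ ≤ β) :
    rayleighInf (∑ i, w i • T i) - 2 * Fintype.card ι * c * β ≤
      rayleighInf (∑ i, ((1 - Fintype.card ι * c) * w i + c) • T i) := by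
  set m : ℝ := (Fintype.card ι : ℝ)
  set L := rayleighInf (∑ i, w i • T i)
  have hsplit : ∑ i, ((1 - m * c) * w i + c) • T i =
      (1 - m * c) • ∑ i, w i • T i + c • ∑ i, T i := by
    simp only [add_smul, mul_smul, Finset.sum_add_distrib, Finset.smul_sum]
  have hL : L ≤ β := (rayleighInf_le_norm _).trans (norm_sum_smul_le_of_mem_stdSimplex hw hT)
  have hsum : -(m * β) ≤ rayleighInf (∑ i, T i) := by
    refine le_trans ?_ (neg_norm_le_rayleighInf _)
    rw [neg_le_neg_iff]
    calc ‖∑ i, T i‖ ≤ ∑ i, ‖T i‖ := norm_sum_le _ _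
      _ ≤ ∑ _i : ι, β := Finset.sum_le_sum fun i _ => hT i
      _ = m * β := by rw [Finset.sum_const, Finset.card_univ, nsmul_eq_mul]
  have hmcL : m * c * L ≤ m * c * β :=
    mul_le_mul_of_nonneg_left hL (mul_nonneg (Nat.cast_nonneg _) hc)
  calc L - 2 * m * c * β ≤ (1 - m * c) * L + c * -(m * β) := by linarith
    _ ≤ (1 - m * c) * L + c * rayleighInf (∑ i, T i) := by gcongr
    _ = rayleighInf ((1 - m * c) • ∑ i, w i • T i) + rayleighInf (c • ∑ i, T i) := by
        rw [rayleighInf_smul (sub_nonneg.2 hmc), rayleighInf_smul hc]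
    _ ≤ _ := hsplit ▸ rayleighInf_add_le _ _

end RayleighInf

lemma sum_sum_mul_mul_eq_inner_toEuclideanCLM {n : ℕ} (A : Matrix (Fin n) (Fin n) ℝ)
    (v : EuclideanSpace ℝ (Fin n)) :
    ∑ i, ∑ j, v i * A i j * v j = ⟪Matrix.toEuclideanCLM (𝕜 := ℝ) A v, v⟫_ℝ := by
  simp [PiLp.inner_apply, Matrix.mulVec, dotProduct, Finset.mul_sum, mul_assoc]

lemma lamMin_sum_smul {n m : ℕ} (w : Fin m → ℝ) (H : Fin m → Matrix (Fin n) (Fin n) ℝ) :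
    lamMin (∑ i, w i • H i) =
      rayleighInf (∑ i, w i • Matrix.toEuclideanCLM (𝕜 := ℝ) (H i)) := by
  simp only [lamMin, rayleighInf, sum_sum_mul_mul_eq_inner_toEuclideanCLM, map_sum, map_smul]

lemma shift_mem_simplexC {m : ℕ} {w : Fin m → ℝ} (hw : w ∈ stdSimplex ℝ (Fin m)) {c : ℝ}
    (hc : 0 ≤ c) (hmc : m * c ≤ 1) :
    (fun i => (1 - m * c) * w i + c) ∈ simplexC m c := by
  refine ⟨⟨fun i => ?_, ?_⟩, fun i => le_add_of_nonneg_left ?_⟩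
  · exact add_nonneg (mul_nonneg (sub_nonneg.2 hmc) (hw.1 i)) hc
  · rw [Finset.sum_add_distrib, ← Finset.mul_sum, hw.2, Finset.sum_const, Finset.card_univ,
      Fintype.card_fin, nsmul_eq_mul]
    ring
  · exact mul_nonneg (sub_nonneg.2 hmc) (hw.1 i)

theorem wmin_minimal_eigenvalue_general {n m : ℕ}
    (H : Fin m → Matrix (Fin n) (Fin n) ℝ) (β : ℝ)
    (hHβ : ∀ i, specNorm (H i) ≤ β)
    (wmin : ℝ) (hwmin : 0 < wmin) (hwmin' : wmin ≤ 1 / m)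
    (wstar : Fin m → ℝ) (hwstar : wstar ∈ stdSimplex ℝ (Fin m))
    (what : Fin m → ℝ)
    (hwhat_max : ∀ w ∈ simplexC m wmin,
      lamMin (∑ i, w i • H i) ≤ lamMin (∑ i, what i • H i)) :
    lamMin (∑ i, wstar i • H i) - 2 * m * wmin * β ≤ lamMin (∑ i, what i • H i) := by
  have hmw : (m : ℝ) * wmin ≤ 1 :=
    (mul_le_mul_of_nonneg_left hwmin' (Nat.cast_nonneg m)).trans
      (by simpa only [one_div] using mul_inv_le_one)
  have hshift := sub_le_rayleighInf_sum_shift hwstar hwmin.le (by simpa using hmw) hHβ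
  simp only [Fintype.card_fin, ← lamMin_sum_smul] at hshift
  exact hshift.trans (hwhat_max _ (shift_mem_simplexC hwstar hwmin.le hmw))

/-- Continuity of the maximal minimal-eigenvalue under truncation of the simplex:
maximizing over `Δ_{m,w_min}` instead of `Δ_m` loses at most `2 m w_min β`. -/
theorem wmin_minimal_eigenvalue {n m : ℕ} (hn : 0 < n) (hm : 0 < m)
    (H : Fin m → Matrix (Fin n) (Fin n) ℝ) (β : ℝ) (hβ : 0 ≤ β)
    (hH : ∀ i, (H i).IsSymm) (hHβ : ∀ i, specNorm (H i) ≤ β)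
    (wmin : ℝ) (hwmin : 0 < wmin) (hwmin' : wmin ≤ 1 / m)
    (wstar : Fin m → ℝ) (hwstar : wstar ∈ stdSimplex ℝ (Fin m))
    (hwstar_max : ∀ w ∈ stdSimplex ℝ (Fin m),
      lamMin (∑ i, w i • H i) ≤ lamMin (∑ i, wstar i • H i))
    (what : Fin m → ℝ) (hwhat : what ∈ simplexC m wmin)
    (hwhat_max : ∀ w ∈ simplexC m wmin,
      lamMin (∑ i, w i • H i) ≤ lamMin (∑ i, what i • H i)) :
    lamMin (∑ i, wstar i • H i) - 2 * m * wmin * β ≤ lamMin (∑ i, what i • H i) :=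
  wmin_minimal_eigenvalue_general H β hHβ wmin hwmin hwmin' wstar hwstar what hwhat_max
end
end

section
/- Let f_1, …, f_m : ℝⁿ → ℝ be convex differentiable functions sharing a common minimizer x⋆ (x⋆ minimizes every f_i), and let w̄ ∈ ℝ^m with w̄ ≥ 0 componentwise be such that the weighted function f_{w̄} is β-smooth. Then for every x ∈ ℝⁿ: sup over w ∈ ℝ^m with w ≥ 0 componentwise of [2(f_w(x) − f_w(x⋆)) − ‖∇f_w(x)‖²] is at least (f_{w̄}(x) − f_{w̄}(x⋆))/(2β). -/
open scoped BigOperators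
open RealInnerProductSpace
noncomputable section

abbrev E (n : ℕ) := EuclideanSpace ℝ (Fin n)

/-- `f` is `β`-smooth. -/
def IsBetaSmooth {n : ℕ} (β : ℝ) (f : E n → ℝ) : Prop :=
  ∀ x y : E n, f y ≤ f x + ⟪gradient f x, y - x⟫ + β / 2 * ‖y - x‖ ^ 2

/-!
If `x⋆` minimizes a `β`-smooth `g`, a gradient step from `x` cannot go below `g x⋆`, whence
`‖∇g(x)‖² ≤ 2β (g(x) − g(x⋆))`. For `g = f_{w̄}` the weight `w = w̄ / (2β)` then gives the value
`(g(x) − g(x⋆))/β − ‖∇g(x)‖²/(4β²) ≥ (g(x) − g(x⋆))/(2β)`. The supremum really dominates this value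
(and is not the junk `0` of an unbounded `⨆`) because, by the first-order convexity inequality,
every value is at most `‖x − x⋆‖²`.
-/

theorem ConvexOn.fderiv_apply_sub_le {G : Type*} [NormedAddCommGroup G] [NormedSpace ℝ G]
    {s : Set G} {f : G → ℝ} (hf : ConvexOn ℝ s f) {x y : G} (hx : x ∈ s) (hy : y ∈ s)
    (hd : DifferentiableAt ℝ f x) : fderiv ℝ f x (y - x) ≤ f y - f x := by
  have hline : ConvexOn ℝ (AffineMap.lineMap x y ⁻¹' s) (f ∘ AffineMap.lineMap x y) :=
    hf.comp_affineMap (AffineMap.lineMap x y)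
  have hderiv : HasDerivAt (f ∘ AffineMap.lineMap x y) (fderiv ℝ f x (y - x)) (0 : ℝ) := by
    have hfx : HasFDerivAt f (fderiv ℝ f x) (AffineMap.lineMap x y (0 : ℝ)) := by
      simpa using hd.hasFDerivAt
    exact hfx.comp_hasDerivAt 0 AffineMap.hasDerivAt_lineMap
  simpa [slope_def_field] using
    hline.le_slope_of_hasDerivAt (by simpa) (by simpa) zero_lt_one hderiv

section Gradient

variable {F : Type*} [NormedAddCommGroup F] [InnerProductSpace ℝ F] [CompleteSpace F]

theorem ConvexOn.inner_gradient_sub_le {s : Set F} {f : F → ℝ} (hf : ConvexOn ℝ s f) {x y : F}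
    (hx : x ∈ s) (hy : y ∈ s) (hd : DifferentiableAt ℝ f x) :
    ⟪gradient f x, y - x⟫ ≤ f y - f x := by
  rw [inner_gradient_left]
  exact hf.fderiv_apply_sub_le hx hy hd

variable {ι : Type*} [Fintype ι]

theorem hasGradientAt_sum_mul {f : ι → F → ℝ} {x : F} (hf : ∀ i, DifferentiableAt ℝ (f i) x)
    (w : ι → ℝ) :
    HasGradientAt (fun y => ∑ i, w i * f i y) (∑ i, w i • gradient (f i) x) x := by
  rw [hasGradientAt_iff_hasFDerivAt, map_sum]
  refine HasFDerivAt.fun_sum fun i _ => ?_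
  simpa [map_smul, smul_eq_mul] using ((hf i).hasGradientAt.hasFDerivAt).const_mul (w i)

theorem sum_mul_sub_sum_mul_le_inner {s : Set F} {f : ι → F → ℝ}
    (hconv : ∀ i, ConvexOn ℝ s (f i)) {x y : F} (hx : x ∈ s) (hy : y ∈ s)
    (hd : ∀ i, DifferentiableAt ℝ (f i) x) {w : ι → ℝ} (hw : ∀ i, 0 ≤ w i) :
    (∑ i, w i * f i x) - ∑ i, w i * f i y ≤ ⟪∑ i, w i • gradient (f i) x, x - y⟫ := by
  rw [sum_inner, ← Finset.sum_sub_distrib]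
  refine Finset.sum_le_sum fun i _ => ?_
  have h := (hconv i).inner_gradient_sub_le hx hy (hd i)
  rw [← neg_sub x y, inner_neg_right] at h
  rw [real_inner_smul_left, ← mul_sub]
  exact mul_le_mul_of_nonneg_left (by linarith) (hw i)

theorem two_mul_sum_mul_sub_sub_norm_sq_le {s : Set F} {f : ι → F → ℝ}
    (hconv : ∀ i, ConvexOn ℝ s (f i)) {x y : F} (hx : x ∈ s) (hy : y ∈ s)
    (hd : ∀ i, DifferentiableAt ℝ (f i) x) {w : ι → ℝ} (hw : ∀ i, 0 ≤ w i) :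
    2 * ((∑ i, w i * f i x) - ∑ i, w i * f i y) - ‖∑ i, w i • gradient (f i) x‖ ^ 2 ≤
      ‖x - y‖ ^ 2 := by
  set v := ∑ i, w i • gradient (f i) x
  nlinarith [sum_mul_sub_sum_mul_le_inner hconv hx hy hd hw, real_inner_le_norm v (x - y),
    sq_nonneg (‖v‖ - ‖x - y‖)]

end Gradient

theorem IsBetaSmooth.norm_gradient_sq_le {n : ℕ} {β : ℝ} {g : E n → ℝ} (hg : IsBetaSmooth β g)
    (hβ : 0 < β) {xstar : E n} (hmin : ∀ y, g xstar ≤ g y) (x : E n) :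
    ‖gradient g x‖ ^ 2 ≤ 2 * β * (g x - g xstar) := by
  set v := gradient g x
  have hstep := hg x (x - β⁻¹ • v)
  rw [sub_sub_cancel_left, inner_neg_right, real_inner_smul_right, real_inner_self_eq_norm_sq,
    norm_neg, norm_smul, Real.norm_of_nonneg (inv_nonneg.2 hβ.le)] at hstep
  have hdecrease : ‖v‖ ^ 2 / (2 * β) ≤ g x - g xstar := by
    have key : β⁻¹ * ‖v‖ ^ 2 - β / 2 * (β⁻¹ * ‖v‖) ^ 2 = ‖v‖ ^ 2 / (2 * β) := by
      field_simp; ring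
    linarith [hmin (x - β⁻¹ • v)]
  rwa [div_le_iff₀ (by positivity), mul_comm] at hdecrease

/-- Lower bound on the `PAMOO` objective: for convex differentiable `fᵢ` sharing a common
minimizer `x⋆`, and any nonnegative weight vector `w̄` for which `f_{w̄}` is `β`-smooth,
`sup_{w ≥ 0} [2(f_w(x) − f_w(x⋆)) − ‖∇f_w(x)‖²] ≥ (f_{w̄}(x) − f_{w̄}(x⋆))/(2β)`. -/
theorem pamoo_objective_lower_bound {n m : ℕ} (f : Fin m → E n → ℝ) (β : ℝ) (hβ : 0 < β)
    (hconv : ∀ i, ConvexOn ℝ Set.univ (f i))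
    (hdiff : ∀ i, Differentiable ℝ (f i))
    (xstar : E n) (hopt : ∀ i, ∀ y : E n, f i xstar ≤ f i y)
    (wbar : Fin m → ℝ) (hwbar : ∀ i, 0 ≤ wbar i)
    (hsmooth : IsBetaSmooth β (fun y => ∑ i, wbar i * f i y)) :
    ∀ x : E n,
      ((∑ i, wbar i * f i x) - ∑ i, wbar i * f i xstar) / (2 * β) ≤
        ⨆ w : {w : Fin m → ℝ // ∀ i, 0 ≤ w i},
          (2 * ((∑ i, (w : Fin m → ℝ) i * f i x) - ∑ i, (w : Fin m → ℝ) i * f i xstar)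
            - ‖∑ i, (w : Fin m → ℝ) i • gradient (f i) x‖ ^ 2) := by
  intro x
  have hd : ∀ i, DifferentiableAt ℝ (f i) x := fun i => hdiff i x
  have hbdd : BddAbove (Set.range fun w : {w : Fin m → ℝ // ∀ i, 0 ≤ w i} =>
      2 * ((∑ i, (w : Fin m → ℝ) i * f i x) - ∑ i, (w : Fin m → ℝ) i * f i xstar)
        - ‖∑ i, (w : Fin m → ℝ) i • gradient (f i) x‖ ^ 2) :=
    ⟨‖x - xstar‖ ^ 2, Set.forall_mem_range.2 fun w =>
      two_mul_sum_mul_sub_sub_norm_sq_le hconv (Set.mem_univ x) (Set.mem_univ xstar) hd w.2⟩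
  have hgrad := hsmooth.norm_gradient_sq_le hβ
    (fun y => Finset.sum_le_sum fun i _ => mul_le_mul_of_nonneg_left (hopt i y) (hwbar i)) x
  rw [(hasGradientAt_sum_mul hd wbar).gradient] at hgrad
  have hc : 0 < (2 * β)⁻¹ := by positivity
  refine le_ciSup_of_le hbdd
    ⟨fun i => (2 * β)⁻¹ * wbar i, fun i => mul_nonneg hc.le (hwbar i)⟩ ?_
  simp only [mul_assoc, ← Finset.mul_sum, mul_smul, ← Finset.smul_sum, norm_smul,
    Real.norm_of_nonneg hc.le]
  have hc2 : (2 * β)⁻¹ ^ 2 * (2 * β) = (2 * β)⁻¹ := by field_simp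
  rw [← mul_sub, mul_pow, div_eq_inv_mul]
  nlinarith [mul_le_mul_of_nonneg_left hgrad (sq_nonneg (2 * β)⁻¹)]
end
end
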